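/- arXiv:1304.1652 — 5 statements merged into one kernel-verified Lean document; each statement's English description precedes it below -/
import Mathlib

section
/- Let U ⊆ ℂ be a connected open set and let f : ℂ → ℝ be harmonic on U and not constant on U. Then every critical point of f in U is isolated: if z₀ ∈ U satisfies ∇f(z₀) = 0, then there exists ε > 0 such that ∇f(z) ≠ 0 for every z ∈ U with 0 < |z − z₀| < ε. -/
/-- `f : ℂ → ℝ` is harmonic on the open set `U ⊆ ℂ`: it is twice continuously
differentiable on `U` and its Laplacian `∂²f/∂x² + ∂²f/∂y²` vanishes on `U`
(identifying `ℂ` with `ℝ²` with real basis `1, I`). -/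
def HarmonicOnC (f : ℂ → ℝ) (U : Set ℂ) : Prop :=
  ContDiffOn ℝ 2 f U ∧ ∀ z ∈ U,
    iteratedFDeriv ℝ 2 f z ![1, 1] + iteratedFDeriv ℝ 2 f z ![Complex.I, Complex.I] = 0

/-!
For harmonic `f`, the function `g = ∂f/∂x - i ∂f/∂y` satisfies the Cauchy–Riemann equations
(symmetry of the Hessian plus `Δf = 0`), so it is holomorphic on `U`, and its zeros are exactly the
critical points of `f`. If `g` vanished near `z₀`, it would vanish on all of the connected set `U`
and `f` would be constant; so the zeros of `g` are isolated.
-/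

open Complex Filter Topology

theorem gradient_eq_zero_iff {𝕜 F : Type*} [RCLike 𝕜] [NormedAddCommGroup F]
    [InnerProductSpace 𝕜 F] [CompleteSpace F] {f : F → 𝕜} {x : F} :
    gradient f x = 0 ↔ fderiv 𝕜 f x = 0 :=
  map_eq_zero_iff _ (InnerProductSpace.toDual 𝕜 F).symm.injective

theorem Complex.realCLM_ext {E : Type*} [NormedAddCommGroup E] [NormedSpace ℝ E]
    {T S : ℂ →L[ℝ] E} (h1 : T 1 = S 1) (hI : T I = S I) : T = S :=
  ContinuousLinearMap.coe_injective <| basisOneI.ext fun i => by fin_cases i <;> simpa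

/-- On the differential of `f : ℂ → ℝ` this is `∂f/∂x - i ∂f/∂y = 2 ∂f/∂z`, the complex conjugate
of the gradient of `f`. -/
noncomputable def wirtingerCLM : (ℂ →L[ℝ] ℝ) →L[ℝ] ℂ :=
  ofRealCLM.comp (ContinuousLinearMap.apply ℝ ℝ (1 : ℂ)) -
    I • ofRealCLM.comp (ContinuousLinearMap.apply ℝ ℝ I)

theorem wirtingerCLM_apply (T : ℂ →L[ℝ] ℝ) : wirtingerCLM T = (T 1 : ℂ) - I * T I := by
  simp [wirtingerCLM, smul_eq_mul]

theorem wirtingerCLM_eq_zero_iff {T : ℂ →L[ℝ] ℝ} : wirtingerCLM T = 0 ↔ T = 0 := by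
  refine ⟨fun h => realCLM_ext ?_ ?_, fun h => h ▸ map_zero _⟩
  · simpa [wirtingerCLM_apply] using congrArg re h
  · simpa [wirtingerCLM_apply] using congrArg im h

/-- The Cauchy–Riemann equations for `z ↦ wirtingerCLM (fderiv ℝ f z)`, whose real derivative is
`wirtingerCLM ∘ B` with `B` the (symmetric) Hessian of `f`. -/
theorem restrictScalars_toSpanSingleton_eq_wirtingerCLM_comp {B : ℂ →L[ℝ] ℂ →L[ℝ] ℝ}
    (hsymm : B 1 I = B I 1) (htrace : B 1 1 + B I I = 0) :
    (ContinuousLinearMap.toSpanSingleton ℂ (wirtingerCLM (B 1))).restrictScalars ℝ =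
      wirtingerCLM.comp B := by
  refine realCLM_ext (by simp) ?_
  have hII : (B I I : ℂ) = -B 1 1 := by exact_mod_cast eq_neg_of_add_eq_zero_right htrace
  simp only [ContinuousLinearMap.coe_comp, Function.comp_apply, wirtingerCLM_apply,
    ContinuousLinearMap.coe_restrictScalars', ContinuousLinearMap.toSpanSingleton_apply,
    smul_eq_mul, hII, ← hsymm]
  linear_combination -(B 1 I : ℂ) * I_sq

theorem hasDerivAt_wirtingerCLM_of_laplacian_eq_zero {f : ℂ → ℝ} {f' : ℂ → ℂ →L[ℝ] ℝ}
    {B : ℂ →L[ℝ] ℂ →L[ℝ] ℝ} {z : ℂ} (hf : ∀ᶠ y in 𝓝 z, HasFDerivAt f (f' y) y)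
    (hf' : HasFDerivAt f' B z) (hΔ : B 1 1 + B I I = 0) :
    HasDerivAt (fun y => wirtingerCLM (f' y)) (wirtingerCLM (B 1)) z := by
  have hsymm := second_derivative_symmetric_of_eventually_of_real hf hf' 1 I
  exact hasFDerivAt_of_restrictScalars ℝ (wirtingerCLM.hasFDerivAt.comp z hf')
    (restrictScalars_toSpanSingleton_eq_wirtingerCLM_comp hsymm hΔ)

theorem HarmonicOnC.differentiableOn_wirtingerCLM_fderiv {f : ℂ → ℝ} {U : Set ℂ}
    (hf : HarmonicOnC f U) (hU : IsOpen U) :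
    DifferentiableOn ℂ (fun z => wirtingerCLM (fderiv ℝ f z)) U := by
  intro z hz
  have hfd : ∀ᶠ y in 𝓝 z, HasFDerivAt f (fderiv ℝ f y) y := by
    filter_upwards [hU.mem_nhds hz] with y hy
    exact ((hf.1.differentiableOn (by norm_num)) y hy).differentiableAt (hU.mem_nhds hy)
      |>.hasFDerivAt
  have hf' : ContDiffOn ℝ 1 (fderiv ℝ f) U := hf.1.fderiv_of_isOpen hU (by norm_num)
  have hB := ((hf'.differentiableOn one_ne_zero) z hz).differentiableAt (hU.mem_nhds hz)
  have hΔ := hf.2 z hz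
  rw [iteratedFDeriv_two_apply, iteratedFDeriv_two_apply] at hΔ
  exact (hasDerivAt_wirtingerCLM_of_laplacian_eq_zero hfd hB.hasFDerivAt
    (by simpa using hΔ)).differentiableAt.differentiableWithinAt

theorem isolated_critical_points_of_harmonic_general
    (U : Set ℂ) (hU : IsOpen U) (hUconn : IsConnected U)
    (f : ℂ → ℝ) (hf : HarmonicOnC f U)
    (hnc : ¬ ∃ c : ℝ, ∀ z ∈ U, f z = c)
    (z₀ : ℂ) (hz₀ : z₀ ∈ U) :
    ∃ ε > 0, ∀ z ∈ U, 0 < ‖z - z₀‖ → ‖z - z₀‖ < ε →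
      gradient f z ≠ 0 := by
  set g := fun z => wirtingerCLM (fderiv ℝ f z)
  have hg : AnalyticOnNhd ℂ g U := (hf.differentiableOn_wirtingerCLM_fderiv hU).analyticOnNhd hU
  have hg_ne : ¬ Set.EqOn g 0 U := fun hg0 =>
    hnc <| hU.exists_is_const_of_fderiv_eq_zero hUconn.isPreconnected
      (hf.1.differentiableOn (by norm_num)) fun z hz => wirtingerCLM_eq_zero_iff.1 (hg0 hz)
  have hzeros : ∀ᶠ z in 𝓝[≠] z₀, g z ≠ 0 := not_frequently.1 fun h =>
    hg_ne (hg.eqOn_zero_of_preconnected_of_frequently_eq_zero hUconn.isPreconnected hz₀ h)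
  obtain ⟨ε, hε, hball⟩ := Metric.eventually_nhds_iff.1 (eventually_nhdsWithin_iff.1 hzeros)
  refine ⟨ε, hε, fun z _ hpos hlt hgrad => hball (by rwa [dist_eq_norm]) ?_ ?_⟩
  · exact fun h => hpos.ne' (by simp [Set.mem_singleton_iff.1 h])
  · simp [g, gradient_eq_zero_iff.1 hgrad]

/-- The critical points of a nonconstant harmonic function on a connected open
set `U ⊆ ℂ` are isolated. Here `gradient f` is the Euclidean gradient of `f` on
`ℂ ≅ ℝ²`. -/
theorem isolated_critical_points_of_harmonic
    (U : Set ℂ) (hU : IsOpen U) (hUconn : IsConnected U)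
    (f : ℂ → ℝ) (hf : HarmonicOnC f U)
    (hnc : ¬ ∃ c : ℝ, ∀ z ∈ U, f z = c)
    (z₀ : ℂ) (hz₀ : z₀ ∈ U) (hcrit : gradient f z₀ = 0) :
    ∃ ε > 0, ∀ z ∈ U, 0 < ‖z - z₀‖ → ‖z - z₀‖ < ε →
      gradient f z ≠ 0 :=
  isolated_critical_points_of_harmonic_general U hU hUconn f hf hnc z₀ hz₀
end

section
/- Let X be a nonempty compact metric space, let φ : ℝ × X → X be a continuous flow on X, and let V : X → ℝ be a continuous function that is a strict Lyapunov function for φ: for every point x that is not a fixed point of φ and every t > 0 one has V(φ(t, x)) > V(x). Assume the set of fixed points of φ is totally disconnected. Then for every x ∈ X there exists a fixed point p of φ such that φ(t, x) → p as t → +∞; in particular the ω-limit set of every point is a single fixed point. -/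
/-!
Along a trajectory the Lyapunov function `V` is nondecreasing and bounded (by compactness), so it
converges to some value `c`; hence `V ≡ c` on the ω-limit set. The ω-limit set is invariant, so a
non-fixed point in it would be moved to a point of strictly larger `V`: it consists of fixed
points. Being the intersection of the nested compact connected sets `closure (φ '' [a, ∞))`, it
is also connected, so total disconnectedness of the fixed-point set makes it a single point `p`,
and in a compact space a trajectory whose only cluster point is `p` converges to `p`.
-/

open Set Filter Topology omegaLimit

theorem IsPreconnected.iInter_of_directed_of_isCompact {X ι : Type*} [TopologicalSpace X]
    [T2Space X] [Nonempty ι] {K : ι → Set X} (hdir : Directed (· ⊇ ·) K)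
    (hcomp : ∀ i, IsCompact (K i)) (hconn : ∀ i, IsPreconnected (K i)) :
    IsPreconnected (⋂ i, K i) := by
  obtain ⟨i₀⟩ := ‹Nonempty ι›
  have hS : IsCompact (⋂ i, K i) := (hcomp i₀).of_isClosed_subset
    (isClosed_iInter fun i => (hcomp i).isClosed) (iInter_subset K i₀)
  rw [isPreconnected_iff_subset_of_fully_disjoint_closed hS.isClosed]
  intro u v hu hv hSuv huv
  obtain ⟨U, W, hU, hW, huU, hvW, hUW⟩ := SeparatedNhds.of_isCompact_isCompact
    (hS.inter_right hu) (hS.inter_right hv) (huv.mono inter_subset_right inter_subset_right)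
  obtain ⟨i, hi⟩ : ∃ i, K i ⊆ U ∪ W := exists_subset_nhds_of_isCompact hdir hcomp fun x hx =>
    (hU.union hW).mem_nhds <| (hSuv hx).imp (fun h => huU ⟨hx, h⟩) fun h => hvW ⟨hx, h⟩
  refine ((hconn i).subset_or_subset hU hW hUW hi).imp (fun h x hx => ?_) fun h x hx => ?_
  · refine (hSuv hx).resolve_right fun hxv => hUW.notMem_of_mem_left ?_ (hvW ⟨hx, hxv⟩)
    exact h (mem_iInter.1 hx i)
  · refine (hSuv hx).resolve_left fun hxu => hUW.notMem_of_mem_right ?_ (huU ⟨hx, hxu⟩)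
    exact h (mem_iInter.1 hx i)

theorem isPreconnected_omegaLimit_atTop {ι α β : Type*} [ConditionallyCompleteLinearOrder ι]
    [TopologicalSpace ι] [OrderTopology ι] [DenselyOrdered ι] [Nonempty ι]
    [TopologicalSpace β] [CompactSpace β] [T2Space β] {ϕ : ι → α → β} {x : α}
    (hϕ : Continuous fun t => ϕ t x) : IsPreconnected (ω atTop ϕ {x}) := by
  have hω : ω atTop ϕ {x} = ⋂ a, closure ((fun t => ϕ t x) '' Ici a) := by
    ext y
    rw [mem_omegaLimit_singleton_iff_mapClusterPt, mapClusterPt_atTop_iff_forall_mem_closure,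
      mem_iInter]
  rw [hω]
  refine IsPreconnected.iInter_of_directed_of_isCompact ?_ (fun _ => isClosed_closure.isCompact)
    fun a => (isPreconnected_Ici.image _ hϕ.continuousOn).closure
  exact Antitone.directed_ge fun a b hab =>
    closure_mono (image_mono (Ici_subset_Ici.2 hab))

theorem omegaLimit_subset_preimage_of_tendsto {τ α β γ : Type*} [TopologicalSpace β]
    [TopologicalSpace γ] [T2Space γ] {f : Filter τ} {ϕ : τ → α → β} {x : α} {V : β → γ} {c : γ}
    (hV : Continuous V) (hlim : Tendsto (fun t => V (ϕ t x)) f (𝓝 c)) :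
    ω f ϕ {x} ⊆ V ⁻¹' {c} := fun y hy => by
  rw [mem_omegaLimit_singleton_iff_mapClusterPt] at hy
  exact eq_of_nhds_neBot (ClusterPt.mono (hy.continuousAt_comp hV.continuousAt) hlim)

namespace Flow

variable {X : Type*} [TopologicalSpace X] (ϕ : Flow ℝ X) {V : X → ℝ}

theorem monotone_comp_of_strictLyapunov
    (hLyap : ∀ x, (¬ ∀ t, ϕ t x = x) → ∀ t, 0 < t → V x < V (ϕ t x)) (x : X) :
    Monotone fun t => V (ϕ t x) := by
  intro s t hst
  have hshift : ϕ t x = ϕ (t - s) (ϕ s x) := by rw [← ϕ.map_add, sub_add_cancel]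
  rcases hst.eq_or_lt with rfl | hlt
  · exact le_rfl
  by_cases hfixed : ∀ r, ϕ r (ϕ s x) = ϕ s x
  · simp only [hshift, hfixed, le_refl]
  · simpa only [hshift] using (hLyap _ hfixed (t - s) (sub_pos.2 hlt)).le

theorem omegaLimit_subset_fixedPoints_of_strictLyapunov [CompactSpace X] (hV : Continuous V)
    (hLyap : ∀ x, (¬ ∀ t, ϕ t x = x) → ∀ t, 0 < t → V x < V (ϕ t x)) (x : X) :
    ω atTop ϕ {x} ⊆ {y | ∀ t, ϕ t y = y} := by
  have hbdd : BddAbove (range fun t => V (ϕ t x)) :=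
    (isCompact_range hV).bddAbove.mono (range_comp_subset_range _ V)
  have hconst := omegaLimit_subset_preimage_of_tendsto hV
    (tendsto_atTop_ciSup (ϕ.monotone_comp_of_strictLyapunov hLyap x) hbdd)
  have hinv := ϕ.isInvariant_omegaLimit atTop {x}
    fun t => tendsto_atTop_add_const_left atTop t tendsto_id
  intro y hy
  by_contra hmoving
  have hlt := hLyap y hmoving 1 one_pos
  rw [hconst hy, hconst (hinv 1 hy)] at hlt
  exact lt_irrefl _ hlt

end Flow

theorem gradientlike_flow_trajectory_tendsto_fixed_point_general
    {X : Type*} [MetricSpace X] [CompactSpace X]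
    (φ : ℝ → X → X)
    (hcont : Continuous fun p : ℝ × X => φ p.1 p.2)
    (hzero : ∀ x, φ 0 x = x)
    (hadd : ∀ s t x, φ (s + t) x = φ s (φ t x))
    (V : X → ℝ) (hV : Continuous V)
    (hLyap : ∀ x, (¬ ∀ t, φ t x = x) → ∀ t, 0 < t → V x < V (φ t x))
    (hfix : IsTotallyDisconnected {x | ∀ t, φ t x = x}) :
    ∀ x : X, ∃ p : X, (∀ t, φ t p = p) ∧
      Filter.Tendsto (fun t => φ t x) Filter.atTop (nhds p) := by
  intro x
  let Φ : Flow ℝ X := ⟨φ, hcont, hadd, hzero⟩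
  have hΩfixed : ω atTop φ {x} ⊆ {y | ∀ t, φ t y = y} :=
    Φ.omegaLimit_subset_fixedPoints_of_strictLyapunov hV hLyap x
  have hΩconn : IsPreconnected (ω atTop φ {x}) :=
    isPreconnected_omegaLimit_atTop (hcont.comp (continuous_id.prodMk continuous_const))
  obtain ⟨p, hp⟩ := nonempty_omegaLimit atTop φ {x} (singleton_nonempty x)
  refine ⟨p, hΩfixed hp, tendsto_nhds_of_unique_mapClusterPt fun y hy => ?_⟩
  rw [← mem_omegaLimit_singleton_iff_mapClusterPt] at hy
  exact hfix _ hΩfixed hΩconn hy hp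

/-- Every trajectory of a continuous flow on a nonempty compact metric space admitting
a continuous strict Lyapunov function, and whose fixed-point set is totally
disconnected, converges to a single fixed point as `t → +∞`. -/
theorem gradientlike_flow_trajectory_tendsto_fixed_point
    {X : Type*} [MetricSpace X] [CompactSpace X] [Nonempty X]
    (φ : ℝ → X → X)
    (hcont : Continuous fun p : ℝ × X => φ p.1 p.2)
    (hzero : ∀ x, φ 0 x = x)
    (hadd : ∀ s t x, φ (s + t) x = φ s (φ t x))
    (V : X → ℝ) (hV : Continuous V)
    (hLyap : ∀ x, (¬ ∀ t, φ t x = x) → ∀ t, 0 < t → V x < V (φ t x))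
    (hfix : IsTotallyDisconnected {x | ∀ t, φ t x = x}) :
    ∀ x : X, ∃ p : X, (∀ t, φ t p = p) ∧
      Filter.Tendsto (fun t => φ t x) Filter.atTop (nhds p) :=
  gradientlike_flow_trajectory_tendsto_fixed_point_general φ hcont hzero hadd V hV hLyap hfix
end

section
/- Let X be a nonempty compact metric space, let φ : ℝ × X → X be a continuous flow with finitely many fixed points, and let V : X → ℝ be continuous with V(φ(t, x)) > V(x) whenever x is not a fixed point and t > 0. Suppose x and x′ are fixed points for which there exist fixed points x = w₀, w₁, …, wₙ = x′ (n ≥ 1) and non-fixed points a₁, …, aₙ such that for each i, φ(t, aᵢ) → w_{i−1} as t → +∞ and φ(t, aᵢ) → wᵢ as t → −∞. Then there exists an injective continuous path Γ : [0,1] → X with Γ(0) = x and Γ(1) = x′, such that V ∘ Γ is strictly decreasing and the image Γ([0,1]) is invariant under φ (that is, φ(t, Γ(s)) ∈ Γ([0,1]) for all t ∈ ℝ and s ∈ [0,1]). -/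
/-!
Let `C i` be the orbit of `a i` together with its two limit points `w i.castSucc` and `w i.succ`.
Each `C i` is compact, connected and invariant, and since `V` increases strictly along the orbit,
`V` maps `C i` injectively into `[V (w i.succ), V (w i.castSucc)]`, hitting the endpoints only at
the two fixed points. These intervals meet at most in endpoints shared by consecutive pieces,
so `V` is injective on the compact connected invariant set `A = ⋃ i, C i`, whose image is
`[V x', V x]`. Hence `V` restricts to a homeomorphism from `A` onto this interval, and its
inverse, reparametrized affinely by `[0, 1]`, is the required arc.
-/

open Set Filter Topology Function

theorem isCompact_insert_insert_range_of_tendsto {X : Type*} [TopologicalSpace X]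
    {f : ℝ → X} (hf : Continuous f) {p q : X} (hp : Tendsto f atTop (𝓝 p))
    (hq : Tendsto f atBot (𝓝 q)) : IsCompact (insert p (insert q (range f))) := by
  -- the two halves `t ↦ f |t|` and `t ↦ f (-|t|)` converge along the cocompact filter
  have hp' : Tendsto (fun t => f |t|) (cocompact ℝ) (𝓝 p) :=
    hp.comp tendsto_norm_cocompact_atTop
  have hq' : Tendsto (fun t => f (-|t|)) (cocompact ℝ) (𝓝 q) :=
    hq.comp (tendsto_neg_atTop_atBot.comp tendsto_norm_cocompact_atTop)
  convert (hp'.isCompact_insert_range_of_cocompact (by fun_prop)).union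
    (hq'.isCompact_insert_range_of_cocompact (by fun_prop)) using 1
  ext y
  simp only [mem_insert_iff, mem_range, mem_union]
  constructor
  · rintro (rfl | rfl | ⟨t, rfl⟩)
    · tauto
    · tauto
    · rcases le_total 0 t with ht | ht
      · exact Or.inl (Or.inr ⟨t, by rw [abs_of_nonneg ht]⟩)
      · exact Or.inr (Or.inr ⟨t, by rw [abs_of_nonpos ht, neg_neg]⟩)
  · rintro ((rfl | ⟨t, rfl⟩) | (rfl | ⟨t, rfl⟩)) <;> simp

theorem isPreconnected_insert_insert_range_of_tendsto {X : Type*} [TopologicalSpace X]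
    {f : ℝ → X} (hf : Continuous f) {p q : X} (hp : Tendsto f atTop (𝓝 p))
    (hq : Tendsto f atBot (𝓝 q)) : IsPreconnected (insert p (insert q (range f))) :=
  (isPreconnected_range hf).subset_closure ((subset_insert _ _).trans (subset_insert _ _)) <|
    insert_subset (mem_closure_of_tendsto hp (.of_forall mem_range_self)) <|
      insert_subset (mem_closure_of_tendsto hq (.of_forall mem_range_self)) subset_closure

theorem StrictMono.mem_Ioo_of_tendsto {α β : Type*} [LinearOrder α] [NoMinOrder α]
    [NoMaxOrder α] [TopologicalSpace β] [Preorder β] [OrderClosedTopology β] {f : α → β}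
    (hf : StrictMono f) {a b : β} (ha : Tendsto f atBot (𝓝 a)) (hb : Tendsto f atTop (𝓝 b))
    (t : α) : f t ∈ Ioo a b := by
  obtain ⟨l, hl⟩ := exists_lt t
  obtain ⟨u, hu⟩ := exists_gt t
  exact ⟨(hf.monotone.le_of_tendsto ha l).trans_lt (hf hl),
    (hf hu).trans_le (hf.monotone.ge_of_tendsto hb u)⟩

theorem isInvariant_iUnion {τ α ι : Type*} {ϕ : τ → α → α} {s : ι → Set α}
    (hs : ∀ i, IsInvariant ϕ (s i)) : IsInvariant ϕ (⋃ i, s i) := fun t _ hy => by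
  obtain ⟨i, hi⟩ := mem_iUnion.1 hy
  exact mem_iUnion.2 ⟨i, hs i t hi⟩

namespace Flow

variable {X : Type*} [TopologicalSpace X] (ϕ : Flow ℝ X)

theorem not_isFixed_apply {x : X} (hx : ¬ ∀ s, ϕ s x = x) (t : ℝ) :
    ¬ ∀ s, ϕ s (ϕ t x) = ϕ t x := fun h =>
  hx fun s => (ϕ.toHomeomorph t).injective <| by
    simp only [toHomeomorph_apply, ← map_add, add_comm t s]
    rw [map_add, h]

def IsStrictLyapunov (V : X → ℝ) : Prop :=
  ∀ x, (¬ ∀ t, ϕ t x = x) → ∀ t, 0 < t → V x < V (ϕ t x)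

theorem isInvariant_insert_insert_orbit {a p q : X} (hp : ∀ t, ϕ t p = p)
    (hq : ∀ t, ϕ t q = q) : IsInvariant ϕ (insert p (insert q (ϕ.orbit a))) := by
  rintro t _ (rfl | rfl | hy)
  · rw [hp t]; exact mem_insert _ _
  · rw [hq t]; exact mem_insert_of_mem _ (mem_insert _ _)
  · exact mem_insert_of_mem _ (mem_insert_of_mem _ (ϕ.isInvariant_orbit a t hy))

variable {ϕ} {V : X → ℝ}

namespace IsStrictLyapunov

theorem strictMono_orbit (hL : ϕ.IsStrictLyapunov V) {x : X} (hx : ¬ ∀ t, ϕ t x = x) :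
    StrictMono fun t => V (ϕ t x) := fun s t hst => by
  simpa only [← map_add, sub_add_cancel] using
    hL (ϕ s x) (ϕ.not_isFixed_apply hx s) (t - s) (sub_pos.2 hst)

variable {a p q : X}

theorem mem_Ioo_of_tendsto (hL : ϕ.IsStrictLyapunov V) (hV : Continuous V)
    (ha : ¬ ∀ t, ϕ t a = a) (hp : Tendsto (ϕ · a) atTop (𝓝 p))
    (hq : Tendsto (ϕ · a) atBot (𝓝 q)) (t : ℝ) : V (ϕ t a) ∈ Ioo (V q) (V p) :=
  (hL.strictMono_orbit ha).mem_Ioo_of_tendsto ((hV.tendsto q).comp hq)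
    ((hV.tendsto p).comp hp) t

theorem mapsTo_insert_insert_orbit (hL : ϕ.IsStrictLyapunov V) (hV : Continuous V)
    (ha : ¬ ∀ t, ϕ t a = a) (hp : Tendsto (ϕ · a) atTop (𝓝 p))
    (hq : Tendsto (ϕ · a) atBot (𝓝 q)) :
    MapsTo V (insert p (insert q (ϕ.orbit a))) (Icc (V q) (V p)) := by
  have hIoo := hL.mem_Ioo_of_tendsto hV ha hp hq
  have hqp : V q ≤ V p := (nonempty_Ioo.1 ⟨_, hIoo 0⟩).le
  rintro _ (rfl | rfl | ⟨t, rfl⟩)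
  · exact ⟨hqp, le_rfl⟩
  · exact ⟨le_rfl, hqp⟩
  · exact Ioo_subset_Icc_self (hIoo t)

theorem injOn_insert_insert_orbit (hL : ϕ.IsStrictLyapunov V) (hV : Continuous V)
    (ha : ¬ ∀ t, ϕ t a = a) (hp : Tendsto (ϕ · a) atTop (𝓝 p))
    (hq : Tendsto (ϕ · a) atBot (𝓝 q)) :
    InjOn V (insert p (insert q (ϕ.orbit a))) := by
  have hIoo := hL.mem_Ioo_of_tendsto hV ha hp hq
  have horbit : InjOn V (ϕ.orbit a) := by
    rintro _ ⟨s, rfl⟩ _ ⟨t, rfl⟩ hst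
    rw [(hL.strictMono_orbit ha).injective hst]
  have hq_notMem : V q ∉ V '' ϕ.orbit a := by
    rintro ⟨_, ⟨t, rfl⟩, h⟩
    exact (hIoo t).1.ne' h
  have hp_notMem : V p ∉ V '' insert q (ϕ.orbit a) := by
    rintro ⟨_, rfl | ⟨t, rfl⟩, h⟩
    · exact (nonempty_Ioo.1 ⟨_, hIoo 0⟩).ne h
    · exact (hIoo t).2.ne h
  refine (injOn_insert fun h => hp_notMem (mem_image_of_mem V h)).2 ⟨?_, hp_notMem⟩
  exact (injOn_insert fun h => hq_notMem (mem_image_of_mem V h)).2 ⟨horbit, hq_notMem⟩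

end IsStrictLyapunov

end Flow

section Chain

variable {X : Type*} {n : ℕ} {V : X → ℝ} {w : Fin (n + 1) → X} {C : Fin n → Set X}

theorem injOn_iUnion_of_chain (hw : StrictAnti (V ∘ w)) (hC : ∀ i, InjOn V (C i))
    (hleft : ∀ i, w i.castSucc ∈ C i) (hright : ∀ i, w i.succ ∈ C i)
    (hmaps : ∀ i, MapsTo V (C i) (Icc (V (w i.succ)) (V (w i.castSucc)))) :
    InjOn V (⋃ i, C i) := by
  suffices key : ∀ i j, i < j → ∀ y ∈ C i, ∀ z ∈ C j, V y = V z → y = z by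
    intro y hy z hz hyz
    obtain ⟨i, hi⟩ := mem_iUnion.1 hy
    obtain ⟨j, hj⟩ := mem_iUnion.1 hz
    rcases lt_trichotomy i j with hij | rfl | hji
    · exact key i j hij y hi z hj hyz
    · exact hC i hi hj hyz
    · exact (key j i hji z hj y hi hyz.symm).symm
  intro i j hij y hy z hz hyz
  -- `V y = V z` is squeezed onto the common value `V (w i.succ) = V (w j.castSucc)`
  have hij' : V (w j.castSucc) ≤ V (w i.succ) := hw.antitone (Fin.succ_le_castSucc_iff.2 hij)
  have hy' : V y = V (w i.succ) :=
    le_antisymm (hyz ▸ (hmaps j hz).2.trans hij') (hmaps i hy).1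
  have hz' : V z = V (w j.castSucc) := le_antisymm (hmaps j hz).2 (hyz ▸ hy' ▸ hij')
  rw [hC i hy (hright i) hy', hC j hz (hleft j) hz']
  exact congrArg w (hw.injective (hy'.symm.trans (hyz.trans hz')))

theorem mapsTo_iUnion_of_chain (hw : Antitone (V ∘ w))
    (hmaps : ∀ i, MapsTo V (C i) (Icc (V (w i.succ)) (V (w i.castSucc)))) :
    MapsTo V (⋃ i, C i) (Icc (V (w (Fin.last n))) (V (w 0))) := by
  intro y hy
  obtain ⟨i, hi⟩ := mem_iUnion.1 hy
  exact Icc_subset_Icc (hw (Fin.le_last _)) (hw (Fin.zero_le _)) (hmaps i hi)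

theorem isPreconnected_iUnion_of_chain [TopologicalSpace X] (hC : ∀ i, IsPreconnected (C i))
    (hleft : ∀ i, w i.castSucc ∈ C i) (hright : ∀ i, w i.succ ∈ C i) :
    IsPreconnected (⋃ i, C i) := by
  refine IsPreconnected.iUnion_of_chain hC fun i => ?_
  cases n with
  | zero => exact i.elim0
  | succ m =>
    induction i using Fin.lastCases with
    | last => exact ⟨_, by rw [Fin.orderSucc_last]; exact ⟨hleft _, hleft _⟩⟩
    | cast j =>
      refine ⟨w j.castSucc.succ, hright _, ?_⟩
      rw [Fin.orderSucc_castSucc, Fin.succ_castSucc]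
      exact hleft _

end Chain

theorem IsCompact.exists_strictAntiOn_param_of_injOn {X : Type*} [TopologicalSpace X]
    {V : X → ℝ} {A : Set X} (hA : IsCompact A) (hAc : IsPreconnected A)
    (hV : ContinuousOn V A) (hinj : InjOn V A) {p q : X} (hp : p ∈ A) (hq : q ∈ A)
    (hmaps : MapsTo V A (Icc (V q) (V p))) (hqp : V q < V p) :
    ∃ Γ : ℝ → X, Continuous Γ ∧ Γ 0 = p ∧ Γ 1 = q ∧ StrictAntiOn (V ∘ Γ) (Icc 0 1) ∧
      Γ '' Icc 0 1 = A := by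
  have himage : V '' A = Icc (V q) (V p) :=
    (image_subset_iff.2 hmaps).antisymm <|
      (hAc.image V hV).Icc_subset (mem_image_of_mem V hq) (mem_image_of_mem V hp)
  have : CompactSpace A := isCompact_iff_compactSpace.mp hA
  let f : A → Icc (V q) (V p) := fun y => ⟨V y, hmaps y.2⟩
  have hf : Bijective f := by
    refine ⟨fun y z h => Subtype.ext (hinj y.2 z.2 (congrArg Subtype.val h)), fun v => ?_⟩
    obtain ⟨y, hy, hyv⟩ : (v : ℝ) ∈ V '' A := by rw [himage]; exact v.2
    exact ⟨⟨y, hy⟩, Subtype.ext hyv⟩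
  have hfc : Continuous (Equiv.ofBijective f hf) := hV.domRestrict.subtype_mk _
  let e : A ≃ₜ Icc (V q) (V p) := hfc.homeoOfEquivCompactToT2
  let L : ℝ → ℝ := AffineMap.lineMap (V p) (V q)
  have hL : L '' Icc 0 1 = Icc (V q) (V p) := by
    rw [← segment_eq_image_lineMap, segment_symm, segment_eq_Icc hqp.le]
  let Γ : ℝ → X := fun s => e.symm (projIcc (V q) (V p) hqp.le (L s))
  have hΓA : ∀ s, Γ s ∈ A := fun s => (e.symm _).2
  have hVΓ : ∀ s ∈ Icc (0 : ℝ) 1, V (Γ s) = L s := fun s hs => by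
    simp only [Γ, projIcc_of_mem hqp.le (hL ▸ mem_image_of_mem L hs)]
    exact congrArg Subtype.val (e.apply_symm_apply _)
  have hΓ_eq : ∀ s ∈ Icc (0 : ℝ) 1, ∀ y ∈ A, V y = L s → Γ s = y := fun s hs y hy h =>
    hinj (hΓA s) hy ((hVΓ s hs).trans h.symm)
  refine ⟨Γ, by fun_prop, hΓ_eq 0 (left_mem_Icc.2 zero_le_one) p hp (by simp [L]),
    hΓ_eq 1 (right_mem_Icc.2 zero_le_one) q hq (by simp [L]), fun s hs t ht hst => ?_, ?_⟩
  · simp only [comp_apply, hVΓ s hs, hVΓ t ht]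
    exact lt_of_not_ge ((lineMap_le_lineMap_iff_of_lt hst).not.2 hqp.not_ge)
  · refine (image_subset_iff.2 fun s _ => hΓA s).antisymm fun y hy => ?_
    obtain ⟨s, hs, hsy⟩ : V y ∈ L '' Icc 0 1 := hL ▸ hmaps hy
    exact ⟨s, hs, hΓ_eq s hs y hy hsy.symm⟩

theorem exists_monotone_invariant_arc_of_heteroclinic_chain_general
    {X : Type*} [MetricSpace X]
    (φ : ℝ → X → X)
    (hcont : Continuous fun p : ℝ × X => φ p.1 p.2)
    (hzero : ∀ x, φ 0 x = x)
    (hadd : ∀ s t x, φ (s + t) x = φ s (φ t x))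
    (V : X → ℝ) (hV : Continuous V)
    (hLyap : ∀ x, (¬ ∀ t, φ t x = x) → ∀ t, 0 < t → V x < V (φ t x))
    (x x' : X)
    (n : ℕ) (hn : 1 ≤ n) (w : Fin (n + 1) → X) (a : Fin n → X)
    (hw : ∀ i, ∀ t, φ t (w i) = w i)
    (hw0 : w 0 = x) (hwn : w (Fin.last n) = x')
    (ha : ∀ i, ¬ ∀ t, φ t (a i) = a i)
    (haT : ∀ i : Fin n,
      Filter.Tendsto (fun t => φ t (a i)) Filter.atTop (nhds (w i.castSucc)))
    (haB : ∀ i : Fin n,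
      Filter.Tendsto (fun t => φ t (a i)) Filter.atBot (nhds (w i.succ))) :
    ∃ Γ : ℝ → X, ContinuousOn Γ (Set.Icc 0 1) ∧ Set.InjOn Γ (Set.Icc 0 1) ∧
      Γ 0 = x ∧ Γ 1 = x' ∧ StrictAntiOn (V ∘ Γ) (Set.Icc 0 1) ∧
      ∀ s ∈ Set.Icc (0 : ℝ) 1, ∀ t : ℝ, φ t (Γ s) ∈ Γ '' Set.Icc (0 : ℝ) 1 := by
  obtain ⟨m, rfl⟩ : ∃ m, n = m + 1 := ⟨n - 1, by omega⟩
  let ϕ : Flow ℝ X := ⟨φ, hcont, hadd, hzero⟩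
  have hL : ϕ.IsStrictLyapunov V := hLyap
  have horbit : ∀ i, Continuous fun t => ϕ t (a i) := fun i =>
    ϕ.continuous continuous_id continuous_const
  let C i := insert (w (Fin.castSucc i)) (insert (w i.succ) (ϕ.orbit (a i)))
  have hleft : ∀ i, w i.castSucc ∈ C i := fun i => mem_insert _ _
  have hright : ∀ i, w i.succ ∈ C i := fun i => mem_insert_of_mem _ (mem_insert _ _)
  have hmaps i := hL.mapsTo_insert_insert_orbit hV (ha i) (haT i) (haB i)
  have hVw : StrictAnti (V ∘ w) := Fin.strictAnti_iff_succ_lt.2 fun i =>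
    nonempty_Ioo.1 ⟨_, hL.mem_Ioo_of_tendsto hV (ha i) (haT i) (haB i) 0⟩
  have hx : x ∈ ⋃ i, C i := mem_iUnion.2 ⟨0, by simpa only [Fin.castSucc_zero, hw0] using hleft 0⟩
  have hx' : x' ∈ ⋃ i, C i :=
    mem_iUnion.2 ⟨Fin.last m, by simpa only [Fin.succ_last, hwn] using hright (Fin.last m)⟩
  obtain ⟨Γ, hΓ, hΓ0, hΓ1, hΓanti, hΓimage⟩ := IsCompact.exists_strictAntiOn_param_of_injOn
    (isCompact_iUnion fun i => isCompact_insert_insert_range_of_tendsto (horbit i) (haT i) (haB i))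
    (isPreconnected_iUnion_of_chain
      (fun i => isPreconnected_insert_insert_range_of_tendsto (horbit i) (haT i) (haB i))
      hleft hright)
    hV.continuousOn
    (injOn_iUnion_of_chain hVw (fun i => hL.injOn_insert_insert_orbit hV (ha i) (haT i) (haB i))
      hleft hright hmaps)
    hx hx' (hw0 ▸ hwn ▸ mapsTo_iUnion_of_chain hVw.antitone hmaps)
    (hw0 ▸ hwn ▸ hVw (Fin.last_pos : 0 < Fin.last (m + 1)))
  refine ⟨Γ, hΓ.continuousOn, hΓanti.injOn.of_comp, hΓ0, hΓ1, hΓanti, fun s hs t => ?_⟩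
  rw [hΓimage]
  exact isInvariant_iUnion (fun i => ϕ.isInvariant_insert_insert_orbit (hw _) (hw _)) t
    (hΓimage ▸ mem_image_of_mem Γ hs)

/-- Existence of a monotone invariant arc joining two fixed points connected by a chain
of heteroclinic trajectories, for a continuous flow on a nonempty compact metric space
with finitely many fixed points and a continuous strict Lyapunov function. -/
theorem exists_monotone_invariant_arc_of_heteroclinic_chain
    {X : Type*} [MetricSpace X] [CompactSpace X] [Nonempty X]
    (φ : ℝ → X → X)
    (hcont : Continuous fun p : ℝ × X => φ p.1 p.2)
    (hzero : ∀ x, φ 0 x = x)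
    (hadd : ∀ s t x, φ (s + t) x = φ s (φ t x))
    (hfin : {x : X | ∀ t, φ t x = x}.Finite)
    (V : X → ℝ) (hV : Continuous V)
    (hLyap : ∀ x, (¬ ∀ t, φ t x = x) → ∀ t, 0 < t → V x < V (φ t x))
    (x x' : X) (hx : ∀ t, φ t x = x) (hx' : ∀ t, φ t x' = x')
    (n : ℕ) (hn : 1 ≤ n) (w : Fin (n + 1) → X) (a : Fin n → X)
    (hw : ∀ i, ∀ t, φ t (w i) = w i)
    (hw0 : w 0 = x) (hwn : w (Fin.last n) = x')
    (ha : ∀ i, ¬ ∀ t, φ t (a i) = a i)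
    (haT : ∀ i : Fin n,
      Filter.Tendsto (fun t => φ t (a i)) Filter.atTop (nhds (w i.castSucc)))
    (haB : ∀ i : Fin n,
      Filter.Tendsto (fun t => φ t (a i)) Filter.atBot (nhds (w i.succ))) :
    ∃ Γ : ℝ → X, ContinuousOn Γ (Set.Icc 0 1) ∧ Set.InjOn Γ (Set.Icc 0 1) ∧
      Γ 0 = x ∧ Γ 1 = x' ∧ StrictAntiOn (V ∘ Γ) (Set.Icc 0 1) ∧
      ∀ s ∈ Set.Icc (0 : ℝ) 1, ∀ t : ℝ, φ t (Γ s) ∈ Γ '' Set.Icc (0 : ℝ) 1 :=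
  exists_monotone_invariant_arc_of_heteroclinic_chain_general φ hcont hzero hadd V hV hLyap x x' n
    hn w a hw hw0 hwn ha haT haB
end

section
/- Let y ∈ ℂ with |y| < 1 and define, for z in the punctured unit disk 𝔻 \ {y} where 𝔻 = {z ∈ ℂ : |z| < 1}, the function G(z) = −(1/(2π))·log|(z − y)/(1 − ȳ·z)| (the minimal Green's function of the hyperbolic disk with pole y). Then: (i) G is harmonic on 𝔻 \ {y}; (ii) G(z) > 0 for all z ∈ 𝔻 \ {y}; (iii) for every ε > 0 there is δ > 0 such that G(z) < ε whenever 1 − δ < |z| < 1; and (iv) G has no critical points: ∇G(z) ≠ 0 for every z ∈ 𝔻 \ {y}. -/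
open Complex ComplexConjugate InnerProductSpace Real

noncomputable def blaschkeFactor (y z : ℂ) : ℂ := (z - y) / (1 - conj y * z)

theorem norm_one_sub_conj_mul_sq_sub_norm_sub_sq (y z : ℂ) :
    ‖1 - conj y * z‖ ^ 2 - ‖z - y‖ ^ 2 = (1 - ‖y‖ ^ 2) * (1 - ‖z‖ ^ 2) := by
  simp only [Complex.sq_norm, normSq_apply, sub_re, sub_im, mul_re, mul_im, conj_re, conj_im,
    one_re, one_im]
  ring

section

variable {y z : ℂ}

theorem one_sub_conj_mul_ne_zero (hy : ‖y‖ < 1) (hz : ‖z‖ ≤ 1) : 1 - conj y * z ≠ 0 := by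
  refine sub_ne_zero.2 fun h => ?_
  have : ‖conj y * z‖ < 1 := by
    rw [norm_mul, norm_conj]
    nlinarith [norm_nonneg y, norm_nonneg z]
  simp [← h] at this

theorem one_sub_norm_blaschkeFactor_sq (hy : ‖y‖ < 1) (hz : ‖z‖ ≤ 1) :
    1 - ‖blaschkeFactor y z‖ ^ 2 = (1 - ‖y‖ ^ 2) * (1 - ‖z‖ ^ 2) / ‖1 - conj y * z‖ ^ 2 := by
  have hD : ‖1 - conj y * z‖ ≠ 0 := norm_ne_zero_iff.2 (one_sub_conj_mul_ne_zero hy hz)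
  rw [← norm_one_sub_conj_mul_sq_sub_norm_sub_sq, blaschkeFactor, norm_div, div_pow,
    one_sub_div (pow_ne_zero 2 hD)]

theorem norm_blaschkeFactor_lt_one (hy : ‖y‖ < 1) (hz : ‖z‖ < 1) : ‖blaschkeFactor y z‖ < 1 := by
  have h := one_sub_norm_blaschkeFactor_sq hy hz.le
  have : 0 < (1 - ‖y‖ ^ 2) * (1 - ‖z‖ ^ 2) / ‖1 - conj y * z‖ ^ 2 := by
    have := one_sub_conj_mul_ne_zero hy hz.le
    have : ‖y‖ ^ 2 < 1 := by nlinarith [norm_nonneg y]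
    have : ‖z‖ ^ 2 < 1 := by nlinarith [norm_nonneg z]
    positivity
  nlinarith [norm_nonneg (blaschkeFactor y z)]

theorem blaschkeFactor_ne_zero (hy : ‖y‖ < 1) (hz : ‖z‖ < 1) (hzy : z ≠ y) :
    blaschkeFactor y z ≠ 0 :=
  div_ne_zero (sub_ne_zero.2 hzy) (one_sub_conj_mul_ne_zero hy hz.le)

theorem one_sub_norm_blaschkeFactor_le (hy : ‖y‖ < 1) (hz : ‖z‖ < 1) :
    1 - ‖blaschkeFactor y z‖ ≤ 2 * (1 + ‖y‖) / (1 - ‖y‖) * (1 - ‖z‖) := by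
  have hy₀ : 0 < 1 - ‖y‖ := by linarith
  have hD : 1 - ‖y‖ ≤ ‖1 - conj y * z‖ := calc
    1 - ‖y‖ ≤ ‖(1 : ℂ)‖ - ‖conj y * z‖ := by
      rw [norm_one, norm_mul, norm_conj]
      nlinarith [norm_nonneg y, norm_nonneg z]
    _ ≤ ‖1 - conj y * z‖ := norm_sub_norm_le _ _
  have hf : ‖blaschkeFactor y z‖ ≤ 1 := (norm_blaschkeFactor_lt_one hy hz).le
  calc 1 - ‖blaschkeFactor y z‖
      ≤ 1 - ‖blaschkeFactor y z‖ ^ 2 := by nlinarith [norm_nonneg (blaschkeFactor y z)]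
    _ = (1 - ‖y‖ ^ 2) * (1 - ‖z‖ ^ 2) / ‖1 - conj y * z‖ ^ 2 :=
      one_sub_norm_blaschkeFactor_sq hy hz.le
    _ ≤ (1 - ‖y‖ ^ 2) * (1 - ‖z‖ ^ 2) / (1 - ‖y‖) ^ 2 := by
      gcongr
      exact mul_nonneg (by nlinarith [norm_nonneg y]) (by nlinarith [norm_nonneg z])
    _ = (1 + ‖y‖) / (1 - ‖y‖) * ((1 + ‖z‖) * (1 - ‖z‖)) := by
      field_simp
      ring
    _ ≤ (1 + ‖y‖) / (1 - ‖y‖) * (2 * (1 - ‖z‖)) := by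
      gcongr
      linarith
    _ = 2 * (1 + ‖y‖) / (1 - ‖y‖) * (1 - ‖z‖) := by ring

theorem hasDerivAt_blaschkeFactor (hy : ‖y‖ < 1) (hz : ‖z‖ < 1) :
    HasDerivAt (blaschkeFactor y) ((1 - conj y * y) / (1 - conj y * z) ^ 2) z := by
  have hD := one_sub_conj_mul_ne_zero hy hz.le
  have h := ((hasDerivAt_id' z).sub_const y).div
    (((hasDerivAt_id' z).const_mul (conj y)).const_sub 1) hD
  exact h.congr_deriv (by ring)

theorem analyticAt_blaschkeFactor (hy : ‖y‖ < 1) (hz : ‖z‖ < 1) :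
    AnalyticAt ℂ (blaschkeFactor y) z :=
  (analyticAt_id.sub analyticAt_const).div
    (analyticAt_const.sub (analyticAt_const.mul analyticAt_id)) (one_sub_conj_mul_ne_zero hy hz.le)

theorem exists_norm_blaschkeFactor_gt (hy : ‖y‖ < 1) {a : ℝ} (ha : a < 1) :
    ∃ δ > 0, ∀ z : ℂ, 1 - δ < ‖z‖ → ‖z‖ < 1 → a < ‖blaschkeFactor y z‖ := by
  set K := 2 * (1 + ‖y‖) / (1 - ‖y‖)
  have hK : 0 < K := div_pos (by positivity) (by linarith)
  refine ⟨(1 - a) / K, div_pos (by linarith) hK, fun z hz₁ hz₂ => ?_⟩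
  have hφ := one_sub_norm_blaschkeFactor_le hy hz₂
  have hKz : K * (1 - ‖z‖) < 1 - a := by
    rwa [← lt_div_iff₀' hK, sub_lt_comm]
  linarith

end

theorem InnerProductSpace.HarmonicOnNhd.harmonicOnC {f : ℂ → ℝ} {U : Set ℂ}
    (hf : HarmonicOnNhd f U) : HarmonicOnC f U := by
  refine ⟨hf.contDiffOn, fun z hz => ?_⟩
  simpa [InnerProductSpace.laplacian_eq_iteratedFDeriv_complexPlane] using (hf z hz).2.self_of_nhds

theorem HasGradientAt.const_mul {F : Type*} [NormedAddCommGroup F] [InnerProductSpace ℝ F]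
    [CompleteSpace F] {f : F → ℝ} {f' x : F} (c : ℝ) (hf : HasGradientAt f f' x) :
    HasGradientAt (fun w => c * f w) (c • f') x := by
  rw [hasGradientAt_iff_hasFDerivAt, map_smul]
  exact hf.hasFDerivAt.const_mul c

theorem HasDerivAt.hasGradientAt_re {g : ℂ → ℂ} {d z : ℂ} (hg : HasDerivAt g d z) :
    HasGradientAt (fun w => (g w).re) (conj d) z := by
  rw [hasGradientAt_iff_hasFDerivAt]
  refine (reCLM.hasFDerivAt.comp z (hg.hasFDerivAt.restrictScalars ℝ)).congr_fderiv ?_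
  ext v
  simp [mul_comm]

theorem HasDerivAt.hasGradientAt_log_norm {g : ℂ → ℂ} {g' z : ℂ} (hg : HasDerivAt g g' z)
    (hz : g z ≠ 0) : HasGradientAt (fun w => Real.log ‖g w‖) (conj (g' / g z)) z := by
  -- rotating by `α` moves `g z` onto the positive real axis, where `log` is holomorphic
  set α : ℂ := ‖g z‖ / g z
  have hα : ‖α‖ = 1 := by simp [α, hz]
  have hαg : α * g z ∈ slitPlane := by simp [α, hz, norm_pos_iff.2 hz]
  have hlog := (hasDerivAt_log hαg).comp z (hg.const_mul α)
  convert hlog.hasGradientAt_re using 2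
  · simp [log_re, hα]
  · field_simp [show α ≠ 0 by simp [α, hz]]

theorem neg_one_div_two_pi_mul_log_lt {t ε : ℝ} (ht : Real.exp (-(2 * π * ε)) < t) :
    -(1 / (2 * π)) * Real.log t < ε := by
  have hlog : -(2 * π * ε) < Real.log t :=
    (Real.lt_log_iff_exp_lt ((Real.exp_pos _).trans ht)).2 ht
  calc -(1 / (2 * π)) * Real.log t < -(1 / (2 * π)) * -(2 * π * ε) :=
        mul_lt_mul_of_neg_left hlog (by simp [pi_pos])
    _ = ε := by field_simp

/-- The minimal Green's function `G(z) = -(1/(2π))·log|(z - y)/(1 - ȳz)|` of the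
hyperbolic unit disk with pole `y`: it is harmonic and positive on the punctured disk,
tends to `0` at the boundary circle, and has no critical points. -/
theorem hyperbolic_disk_greens_function_properties
    (y : ℂ) (hy : ‖y‖ < 1) (G : ℂ → ℝ)
    (hG : ∀ z : ℂ, G z =
      -(1 / (2 * Real.pi)) *
        Real.log ‖(z - y) / (1 - (starRingEnd ℂ) y * z)‖) :
    HarmonicOnC G ({z : ℂ | ‖z‖ < 1} \ {y}) ∧
    (∀ z ∈ ({z : ℂ | ‖z‖ < 1} \ {y}), 0 < G z) ∧
    (∀ ε : ℝ, 0 < ε → ∃ δ : ℝ, 0 < δ ∧ ∀ z : ℂ,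
      1 - δ < ‖z‖ → ‖z‖ < 1 → G z < ε) ∧
    (∀ z ∈ ({z : ℂ | ‖z‖ < 1} \ {y}), gradient G z ≠ 0) := by
  obtain rfl : G = fun z => -(1 / (2 * π)) * Real.log ‖blaschkeFactor y z‖ := funext hG
  have hc : -(1 / (2 * π)) < 0 := by simp [pi_pos]
  refine ⟨HarmonicOnNhd.harmonicOnC fun z hz => ?_, fun z hz => ?_, fun ε hε => ?_,
    fun z hz => ?_⟩
  · exact ((analyticAt_blaschkeFactor hy hz.1).harmonicAt_log_norm
      (blaschkeFactor_ne_zero hy hz.1 hz.2)).const_smul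
  · exact mul_pos_of_neg_of_neg hc (Real.log_neg
      (norm_pos_iff.2 (blaschkeFactor_ne_zero hy hz.1 hz.2)) (norm_blaschkeFactor_lt_one hy hz.1))
  · obtain ⟨δ, hδ, hf⟩ := exists_norm_blaschkeFactor_gt hy
      (Real.exp_lt_one_iff.2 (by nlinarith [pi_pos] : -(2 * π * ε) < 0))
    exact ⟨δ, hδ, fun z hz₁ hz₂ => neg_one_div_two_pi_mul_log_lt (hf z hz₁ hz₂)⟩
  · have hgrad := ((hasDerivAt_blaschkeFactor hy hz.1).hasGradientAt_log_norm
      (blaschkeFactor_ne_zero hy hz.1 hz.2)).const_mul (-(1 / (2 * π)))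
    rw [hgrad.gradient]
    refine smul_ne_zero hc.ne ((map_ne_zero _).2 (div_ne_zero (div_ne_zero ?_ ?_)
      (blaschkeFactor_ne_zero hy hz.1 hz.2)))
    · exact one_sub_conj_mul_ne_zero hy hy.le
    · exact pow_ne_zero 2 (one_sub_conj_mul_ne_zero hy hz.1.le)
end

section
/- Let m ≥ 2 be an integer and k an integer, and define the vector field X : ℝ × ℝ → ℝ × ℝ by X(r, θ) = (r·cos(mθ), −sin(mθ)). Then X(0, kπ/m) = (0, 0), and the total (Fréchet) derivative of X at the point (0, kπ/m) is the linear map (a, b) ↦ ((−1)ᵏ·a, −m·(−1)ᵏ·b); in particular this linear map has determinant −m < 0, so the zero (0, kπ/m) of X is a hyperbolic saddle. -/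
/-!
Along `r = 0` the field `r · cos (mθ)` vanishes identically, so the linearisation of
`(r, θ) ↦ (r f(θ), g(θ))` at `(0, θ₀)` is diagonal, `diag (f θ₀, g' θ₀)`. At `θ₀ = kπ/m` we have
`cos (mθ₀) = (-1)^k` and `sin (mθ₀) = 0`, so the linearisation is `diag ((-1)^k, -m (-1)^k)`,
of determinant `-m`.
-/

open Real

section
variable {𝕜 : Type*} [NontriviallyNormedField 𝕜]

theorem hasFDerivAt_fst_mul_prod_at_fst_zero {f g : 𝕜 → 𝕜} {g' θ₀ : 𝕜}
    (hf : DifferentiableAt 𝕜 f θ₀) (hg : HasDerivAt g g' θ₀) :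
    HasFDerivAt (fun p : 𝕜 × 𝕜 => (p.1 * f p.2, g p.2))
      ((f θ₀ • ContinuousLinearMap.id 𝕜 𝕜).prodMap (g' • ContinuousLinearMap.id 𝕜 𝕜)) (0, θ₀) := by
  have hsnd : HasFDerivAt Prod.snd (ContinuousLinearMap.snd 𝕜 𝕜 𝕜) ((0 : 𝕜), θ₀) := hasFDerivAt_snd
  refine ((hasFDerivAt_fst.mul (hf.hasDerivAt.comp_hasFDerivAt _ hsnd)).prodMk
    (hg.comp_hasFDerivAt _ hsnd)).congr_fderiv ?_
  ext <;> simp [mul_comm]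

theorem det_prodMap_smul_id (a b : 𝕜) :
    LinearMap.det ((a • ContinuousLinearMap.id 𝕜 𝕜).prodMap
      (b • ContinuousLinearMap.id 𝕜 𝕜)).toLinearMap = a * b := by
  simp [LinearMap.det_prodMap]

end

/-- The blown-up vector field `X(r, θ) = (r·cos(mθ), -sin(mθ))` vanishes at
`(0, kπ/m)` and its total derivative there is `(a, b) ↦ ((-1)^k a, -m(-1)^k b)`,
a linear map of determinant `-m < 0`; hence `(0, kπ/m)` is a hyperbolic saddle. -/
theorem polar_blowup_saddle (m : ℕ) (hm : 2 ≤ m) (k : ℤ)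
    (X : ℝ × ℝ → ℝ × ℝ)
    (hX : ∀ r θ : ℝ, X (r, θ) = (r * Real.cos (m * θ), -Real.sin (m * θ))) :
    X (0, k * Real.pi / m) = (0, 0) ∧
    ∃ L : ℝ × ℝ →L[ℝ] ℝ × ℝ,
      HasFDerivAt X L (0, k * Real.pi / m) ∧
      (∀ a b : ℝ, L (a, b) = ((-1 : ℝ) ^ k * a, -(m : ℝ) * (-1 : ℝ) ^ k * b)) ∧
      LinearMap.det (L.toLinearMap) = -(m : ℝ) ∧
      -(m : ℝ) < 0 := by
  have hm_pos : (0 : ℝ) < m := by exact_mod_cast (by omega : 0 < m)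
  set θ₀ := k * π / m
  have hθ₀ : (m : ℝ) * θ₀ = k * π := mul_div_cancel₀ _ hm_pos.ne'
  have hsin : HasDerivAt (fun θ => -sin (m * θ)) (-(cos (m * θ₀) * m)) θ₀ :=
    (hasDerivAt_const_mul _).sin.neg
  have hderiv := hasFDerivAt_fst_mul_prod_at_fst_zero
    (f := fun θ => cos (m * θ)) (by fun_prop) hsin
  rw [hθ₀, cos_int_mul_pi, ← funext fun p : ℝ × ℝ => hX p.1 p.2] at hderiv
  refine ⟨by simp [hX, hθ₀, sin_int_mul_pi], _, hderiv, fun a b => ?_, ?_, by linarith⟩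
  · simp [mul_comm]
  · rw [det_prodMap_smul_id, mul_neg, ← mul_assoc, ← mul_zpow]
    norm_num
end
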